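/- arXiv:1010.2030 — 3 statements merged into one kernel-verified Lean document; each statement's English description precedes it below -/
import Mathlib

section
/- Let d ≥ 3 be an integer. Then the polynomial ξ_{2,2,d}(ẑ) is strictly positive for all ẑ ∈ (−1, 1). Moreover, for every integer q ≥ 3, the polynomial ξ_{q,2,d}(ẑ) has a unique zero ẑ₂ in (−1/(q−1), 1); this zero satisfies ẑ₂ > 0, and ξ_{q,2,d} is strictly positive on (−1/(q−1), ẑ₂) and strictly negative on (ẑ₂, 1). -/
open Real Set Filter Polynomial
open scoped Classical

/-- The polynomial function `ξ_{q,c,d}`. -/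
noncomputable def xiF (q c d : ℕ) (z : ℝ) : ℝ :=
  (∑ i ∈ Finset.range (d - 2), z ^ i)
    - (((c : ℝ) - 1) * ((d : ℝ) - 1) - 1) * z ^ (d - 2)
    - ((q : ℝ) - 1) * (((c : ℝ) - 1) * ((d : ℝ) - 1) - 1) * z ^ (d - 1)
    + ((q : ℝ) - 1) * ∑ i ∈ Finset.range (d - 2), z ^ (d + i)

noncomputable def pP (r : ℝ) (n : ℕ) (z : ℝ) : ℝ :=
  ∑ i ∈ Finset.range n, (((i : ℝ) + 1) * z ^ i - r * ((n : ℝ) - (i : ℝ)) * z ^ (n + 1 + i))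

namespace XiAux
open Finset

lemma pP_split (r : ℝ) (n : ℕ) (z : ℝ) :
    pP r n z = (∑ i ∈ range n, ((i : ℝ) + 1) * z ^ i)
      - r * z ^ (n+1) * ∑ i ∈ range n, ((n : ℝ) - (i : ℝ)) * z ^ i := by
  unfold pP
  rw [Finset.sum_sub_distrib, Finset.mul_sum]
  congr 1
  apply Finset.sum_congr rfl
  intro i _
  rw [pow_add]
  ring

lemma T1 (z : ℝ) (n : ℕ) : (1 - z) * ∑ i ∈ range n, ((i : ℝ) + 1) * z ^ i
    = (∑ i ∈ range n, z ^ i) - n * z ^ n := by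
  induction n with
  | zero => simp
  | succ n ih =>
    rw [Finset.sum_range_succ, Finset.sum_range_succ (fun i => z ^ i)]
    push_cast
    linear_combination ih

lemma T2 (z : ℝ) (n : ℕ) : (1 - z) * ∑ i ∈ range n, ((n : ℝ) - (i : ℝ)) * z ^ i
    = (n : ℝ) - z * ∑ i ∈ range n, z ^ i := by
  induction n with
  | zero => simp
  | succ n ih =>
    have step : ∑ i ∈ range (n+1), (((n+1 : ℕ) : ℝ) - (i:ℝ)) * z ^ i
        = (∑ i ∈ range n, ((n : ℝ) - (i : ℝ)) * z ^ i) + ∑ i ∈ range (n+1), z ^ i := by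
      have e1 : ∀ i ∈ range (n+1), (((n+1 : ℕ) : ℝ) - (i:ℝ)) * z ^ i
          = ((n : ℝ) - (i : ℝ)) * z ^ i + z ^ i := by intro i _; push_cast; ring
      rw [Finset.sum_congr rfl e1, Finset.sum_add_distrib,
        Finset.sum_range_succ (fun i => ((n : ℝ) - (i : ℝ)) * z ^ i)]
      ring
    rw [step, Finset.sum_range_succ (fun i => z ^ i)]
    have g : (1 - z) * (∑ i ∈ range n, z ^ i) = 1 - z ^ n := by
      have := geom_sum_mul z n; linarith
    push_cast
    linear_combination ih + g

lemma I1 (q n : ℕ) (z : ℝ) :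
    xiF q 2 (n + 2) z = (1 - z) * pP ((q : ℝ) - 1) n z := by
  have hd2 : n + 2 - 2 = n := by omega
  have hd1 : n + 2 - 1 = n + 1 := by omega
  have hsum : ∑ i ∈ range n, z ^ (n + 2 + i) = z ^ (n+2) * ∑ i ∈ range n, z ^ i := by
    rw [Finset.mul_sum]; apply Finset.sum_congr rfl; intro i _; rw [pow_add]
  rw [xiF, pP_split, hd2, hd1, hsum]
  push_cast
  linear_combination (-1 : ℝ) * T1 z n + ((q:ℝ)-1) * z^(n+1) * T2 z n

lemma I2 (r : ℝ) (n : ℕ) (z : ℝ) :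
    (1 - z)^2 * pP r n z
      = (1 - z^n) * (1 + r * z^(n+2)) - n * z^n * (1-z) * (1 + r*z) := by
  have g : (1 - z) * (∑ i ∈ range n, z ^ i) = 1 - z ^ n := by
    have := geom_sum_mul z n; linarith
  rw [pP_split]
  linear_combination (1-z) * T1 z n - r * z^(n+1) * (1-z) * T2 z n + (1 + r*z^(n+2)) * g

lemma Kterm (s : ℝ) (hs0 : 0 ≤ s) (hs1 : s < 1) {j n : ℕ} (hj : j < n) :
    s ^ n + s ^ (n + 1) ≤ s ^ j + s ^ (2 * n + 1 - j) := by
  obtain ⟨k, hk, rfl⟩ : ∃ k, 1 ≤ k ∧ n = j + k := ⟨n - j, by omega, by omega⟩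
  have he : 2 * (j + k) + 1 - j = j + (2 * k + 1) := by omega
  rw [he]
  have h1 : s ^ k ≤ 1 := pow_le_one₀ hs0 hs1.le
  have h2 : s ^ (k+1) ≤ 1 := pow_le_one₀ hs0 hs1.le
  have hpow : s ^ (2*k+1) = s ^ k * s ^ (k+1) := by rw [← pow_add]; congr 1; omega
  have key : s ^ k + s ^ (k + 1) ≤ 1 + s ^ (2 * k + 1) := by
    nlinarith [mul_nonneg (sub_nonneg.2 h1) (sub_nonneg.2 h2)]
  have hsj := pow_nonneg hs0 j
  calc s ^ (j + k) + s ^ (j + k + 1) = s ^ j * (s ^ k + s ^ (k+1)) := by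
        rw [pow_add, pow_add, pow_add]; ring
    _ ≤ s ^ j * (1 + s ^ (2*k+1)) := by nlinarith
    _ = s ^ j + s ^ (j + (2*k+1)) := by rw [pow_add]; ring

lemma KEY {n : ℕ} (hn : 1 ≤ n) {s : ℝ} (hs0 : 0 ≤ s) (hs1 : s < 1) :
    (n : ℝ) * s ^ n * (1 - s) * (1 + s) < (1 - s ^ n) * (1 + s ^ (n + 2)) := by
  have hsum : ∑ j ∈ range n, (s ^ n + s ^ (n+1)) < ∑ j ∈ range n, (s ^ j + s ^ (2*n+1-j)) := by
    apply Finset.sum_lt_sum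
    · intro j hj; exact Kterm s hs0 hs1 (Finset.mem_range.1 hj)
    · refine ⟨0, Finset.mem_range.2 (by omega), ?_⟩
      have h1 : s ^ n < 1 := pow_lt_one₀ hs0 hs1 (by omega)
      have h2 : s ^ (n+1) < 1 := pow_lt_one₀ hs0 hs1 (by omega)
      have hpow2 : s ^ (2*n+1-0) = s ^ n * s ^ (n+1) := by
        rw [Nat.sub_zero, ← pow_add]; congr 1; omega
      have h5 := pow_nonneg hs0 n
      have h6 := pow_nonneg hs0 (n+1)
      simp only [pow_zero]
      nlinarith [mul_pos (sub_pos.2 h1) (sub_pos.2 h2)]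
  have hrefl : ∑ j ∈ range n, s ^ (2 * n + 1 - j) = ∑ j ∈ range n, s ^ (n + 2 + j) := by
    rw [← Finset.sum_range_reflect (fun j => s ^ (n + 2 + j)) n]
    apply Finset.sum_congr rfl
    intro j hj
    simp only [Finset.mem_range] at hj
    congr 1
    omega
  have hsplit : ∑ j ∈ range n, s ^ (n + 2 + j) = s ^ (n+2) * ∑ j ∈ range n, s ^ j := by
    rw [Finset.mul_sum]; apply Finset.sum_congr rfl; intro j _; rw [pow_add]
  have hR : ∑ j ∈ range n, (s ^ j + s ^ (2*n+1-j))
      = (∑ j ∈ range n, s ^ j) + s ^ (n+2) * ∑ j ∈ range n, s ^ j := by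
    rw [Finset.sum_add_distrib, hrefl, hsplit]
  have hconst : ∑ j ∈ range n, (s ^ n + s ^ (n+1)) = (n : ℝ) * (s ^ n + s ^ (n+1)) := by
    rw [Finset.sum_const, Finset.card_range, nsmul_eq_mul]
  rw [hR, hconst] at hsum
  have g : (1 - s) * (∑ i ∈ range n, s ^ i) = 1 - s ^ n := by
    have := geom_sum_mul s n; linarith
  have h1s : 0 < 1 - s := by linarith
  have h7 := mul_lt_mul_of_pos_left hsum h1s
  calc (n : ℝ) * s ^ n * (1 - s) * (1 + s) = (1-s) * ((n:ℝ) * (s^n + s^(n+1))) := by ring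
    _ < (1-s) * ((∑ j ∈ range n, s ^ j) + s^(n+2) * ∑ j ∈ range n, s ^ j) := h7
    _ = (1 + s^(n+2)) * ((1-s) * ∑ j ∈ range n, s ^ j) := by ring
    _ = (1 - s ^ n) * (1 + s ^ (n + 2)) := by rw [g]; ring

lemma MONO {r : ℝ} (hr : 0 ≤ r) {n : ℕ} (hn : 1 ≤ n) {x y : ℝ} (hx : 0 < x) (hxy : x < y) :
    x ^ n * pP r n y < y ^ n * pP r n x := by
  have hy : 0 < y := hx.trans hxy
  unfold pP
  rw [Finset.mul_sum, Finset.mul_sum]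
  apply Finset.sum_lt_sum
  · intro i hi
    have hin : i < n := Finset.mem_range.1 hi
    obtain ⟨k, hk, hnk⟩ : ∃ k, 1 ≤ k ∧ n = i + k := ⟨n - i, by omega, by omega⟩
    have a1 : x ^ n * y ^ i ≤ x ^ i * y ^ n := by
      rw [hnk, pow_add, pow_add]
      have c : (0:ℝ) ≤ x ^ i * y ^ i := by positivity
      nlinarith [mul_le_mul_of_nonneg_left (pow_le_pow_left₀ hx.le hxy.le k) c]
    have a2 : x ^ (n + 1 + i) * y ^ n ≤ x ^ n * y ^ (n + 1 + i) := by
      have he : n + 1 + i = n + (1 + i) := by omega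
      rw [he, pow_add x n (1+i), pow_add y n (1+i)]
      have c : (0:ℝ) ≤ x ^ n * y ^ n := by positivity
      nlinarith [mul_le_mul_of_nonneg_left (pow_le_pow_left₀ hx.le hxy.le (1 + i)) c]
    have c1 : (0:ℝ) ≤ (i:ℝ) + 1 := by positivity
    have c2 : (0:ℝ) ≤ r * ((n:ℝ) - (i:ℝ)) := by
      apply mul_nonneg hr
      have : (i:ℝ) < n := by exact_mod_cast hin
      linarith
    nlinarith [mul_le_mul_of_nonneg_left a1 c1, mul_le_mul_of_nonneg_left a2 c2]
  · refine ⟨0, Finset.mem_range.2 (by omega), ?_⟩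
    have a2 : x ^ (n + 1 + 0) * y ^ n ≤ x ^ n * y ^ (n + 1 + 0) := by
      have he : n + 1 + 0 = n + 1 := by omega
      rw [he, pow_succ, pow_succ]
      have c : (0:ℝ) ≤ x ^ n * y ^ n := by positivity
      nlinarith [mul_le_mul_of_nonneg_left hxy.le c]
    have a1 : x ^ n < y ^ n := pow_lt_pow_left₀ hxy hx.le (by omega)
    have c2 : (0:ℝ) ≤ r * ((n:ℝ) - (0:ℝ)) := by
      apply mul_nonneg hr; simp [Nat.cast_nonneg]
    push_cast
    nlinarith [mul_le_mul_of_nonneg_left a2 c2]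

lemma P0 {r : ℝ} {n : ℕ} (hn : 1 ≤ n) : pP r n 0 = 1 := by
  unfold pP
  rw [Finset.sum_eq_single_of_mem 0 (Finset.mem_range.2 (by omega))]
  · simp
  · intro i _ hi
    simp [zero_pow hi, zero_pow (show n + 1 + i ≠ 0 by omega)]

lemma sum_id (n : ℕ) : ∑ i ∈ range n, ((n:ℝ) - (i:ℝ)) = ∑ i ∈ range n, ((i:ℝ) + 1) := by
  induction n with
  | zero => simp
  | succ n ih =>
    have e1 : ∀ i ∈ range (n+1), ((n+1 : ℕ) : ℝ) - (i:ℝ) = ((n : ℝ) - (i : ℝ)) + 1 := by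
      intro i _; push_cast; ring
    rw [Finset.sum_congr rfl e1, Finset.sum_add_distrib,
      Finset.sum_range_succ (fun i => ((n:ℝ) - (i:ℝ))),
      Finset.sum_range_succ (fun i => ((i:ℝ) + 1)), ih, Finset.sum_const, Finset.card_range]
    -- cast already normal
    ring

lemma P1 {r : ℝ} (hr : 1 < r) {n : ℕ} (hn : 1 ≤ n) : pP r n 1 < 0 := by
  unfold pP
  have e : ∀ i ∈ range n, ((i : ℝ) + 1) * (1:ℝ) ^ i - r * ((n : ℝ) - (i : ℝ)) * (1:ℝ) ^ (n + 1 + i)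
      = ((i : ℝ) + 1) - r * ((n : ℝ) - (i : ℝ)) := by intro i _; simp
  rw [Finset.sum_congr rfl e, Finset.sum_sub_distrib, ← Finset.mul_sum, sum_id]
  have hpos : 0 < ∑ i ∈ range n, ((i:ℝ) + 1) := by
    apply Finset.sum_pos
    · intro i _; positivity
    · exact Finset.nonempty_range_iff.2 (by omega)
  nlinarith

lemma POSneg {r : ℝ} (hr : 1 ≤ r) {n : ℕ} (hn : 1 ≤ n) {z : ℝ} (hz1 : -1 < z) (hz0 : z ≤ 0)
    (hrz : r * (-z) < 1) :
    0 < (1 - z^n) * (1 + r * z^(n+2)) - n * z^n * (1-z) * (1 + r*z) := by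
  obtain ⟨s, rfl⟩ : ∃ s, z = -s := ⟨-z, by ring⟩
  have hs0 : 0 ≤ s := by linarith
  have hs1 : s < 1 := by linarith
  have hrs : r * s < 1 := by simpa using hrz
  rcases Nat.even_or_odd n with he | ho
  · have e1 : (-s)^n = s^n := he.neg_pow s
    have he2 : Even (n+2) := by rcases he with ⟨k,hk⟩; exact ⟨k+1, by omega⟩
    have e2 : (-s)^(n+2) = s^(n+2) := he2.neg_pow s
    rw [e1, e2]
    have key := KEY hn hs0 hs1
    have b1 : (0:ℝ) ≤ s^n := pow_nonneg hs0 n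
    have b2 : s^n ≤ 1 := pow_le_one₀ hs0 hs1.le
    have b3 : (0:ℝ) ≤ s^(n+2) := pow_nonneg hs0 _
    have b4 : s ≤ r * s := by nlinarith
    have b5 : s^(n+2) ≤ r * s^(n+2) := by nlinarith
    nlinarith [mul_nonneg (mul_nonneg (Nat.cast_nonneg n : (0:ℝ) ≤ n) b1) (by linarith : (0:ℝ) ≤ 1 + s),
      mul_nonneg (sub_nonneg.2 b2) (by linarith : (0:ℝ) ≤ r * s^(n+2) - s^(n+2))]
  · have e1 : (-s)^n = -(s^n) := ho.neg_pow s
    have ho2 : Odd (n+2) := by rcases ho with ⟨k,hk⟩; exact ⟨k+1, by omega⟩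
    have e2 : (-s)^(n+2) = -(s^(n+2)) := ho2.neg_pow s
    rw [e1, e2]
    have b1 : (0:ℝ) ≤ s^n := pow_nonneg hs0 n
    have b2 : s^n ≤ 1 := pow_le_one₀ hs0 hs1.le
    have hp : s^(n+2) = s * s^(n+1) := by rw [pow_succ']
    have b6 : s^(n+1) ≤ 1 := pow_le_one₀ hs0 hs1.le
    have b7 : (0:ℝ) ≤ s^(n+1) := pow_nonneg hs0 _
    have hrs0 : 0 ≤ r * s := mul_nonneg (by linarith) hs0
    have hr2 : r * s^(n+2) < 1 := by
      rw [hp, ← mul_assoc]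
      calc r * s * s^(n+1) ≤ r * s := mul_le_of_le_one_right hrs0 b6
        _ < 1 := hrs
    nlinarith [mul_nonneg (mul_nonneg (mul_nonneg (Nat.cast_nonneg n : (0:ℝ) ≤ n) b1) (by linarith : (0:ℝ) ≤ 1 + s)) (by linarith : (0:ℝ) ≤ 1 - r*s),
      mul_nonneg b1 (by linarith : (0:ℝ) ≤ 1 - r * s^(n+2))]

lemma POSpos {n : ℕ} (hn : 1 ≤ n) {z : ℝ} (hz0 : 0 ≤ z) (hz1 : z < 1) :
    0 < (1 - z^n) * (1 + 1 * z^(n+2)) - n * z^n * (1-z) * (1 + 1*z) := by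
  nlinarith [KEY hn hz0 hz1]

lemma pP_pos_of_F {r : ℝ} {n : ℕ} {z : ℝ} (hz : z < 1)
    (hF : 0 < (1 - z^n) * (1 + r * z^(n+2)) - n * z^n * (1-z) * (1 + r*z)) :
    0 < pP r n z := by
  have h2 := I2 r n z
  have hsq : 0 < (1-z)^2 := pow_pos (by linarith) 2
  nlinarith [h2, hF, hsq]

lemma pP_cont (r : ℝ) (n : ℕ) : Continuous (pP r n) := by
  unfold pP
  exact continuous_finset_sum _ (fun i _ => by continuity)

end XiAux

/-- For `d ≥ 3`: `ξ_{2,2,d}` is strictly positive on `(−1,1)`; and for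
every `q ≥ 3`, `ξ_{q,2,d}` has a unique zero `ẑ₂ ∈ (−1/(q−1), 1)`, which is positive,
with `ξ_{q,2,d}` strictly positive on `(−1/(q−1), ẑ₂)` and strictly negative on `(ẑ₂, 1)`. -/
theorem xiF_c_two_signs (d : ℕ) (hd : 3 ≤ d) :
    (∀ z ∈ Set.Ioo (-1 : ℝ) 1, 0 < xiF 2 2 d z) ∧
    (∀ q : ℕ, 3 ≤ q →
      ∃ z2 ∈ Set.Ioo (-(1 / ((q : ℝ) - 1))) 1,
        0 < z2 ∧ xiF q 2 d z2 = 0 ∧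
        (∀ z ∈ Set.Ioo (-(1 / ((q : ℝ) - 1))) 1, xiF q 2 d z = 0 → z = z2) ∧
        (∀ z ∈ Set.Ioo (-(1 / ((q : ℝ) - 1))) z2, 0 < xiF q 2 d z) ∧
        (∀ z ∈ Set.Ioo z2 1, xiF q 2 d z < 0)) := by
  obtain ⟨n, rfl⟩ : ∃ n, d = n + 2 := ⟨d - 2, by omega⟩
  have hn : 1 ≤ n := by omega
  constructor
  · -- q = 2 case
    intro z hz
    obtain ⟨hz1, hz2⟩ := hz
    have hxi := XiAux.I1 2 n z
    have hc : ((2:ℕ):ℝ) - 1 = 1 := by norm_num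
    rw [hc] at hxi
    have hF : 0 < (1 - z^n) * (1 + 1 * z^(n+2)) - n * z^n * (1-z) * (1 + 1*z) := by
      rcases le_or_gt z 0 with h0 | h0
      · exact XiAux.POSneg le_rfl hn hz1 h0 (by simpa using (by linarith : -z < 1))
      · exact XiAux.POSpos hn h0.le hz2
    have hpP : 0 < pP 1 n z := XiAux.pP_pos_of_F hz2 hF
    rw [hxi]
    exact mul_pos (by linarith) hpP
  · -- q ≥ 3 case
    intro q hq
    set r : ℝ := (q:ℝ) - 1 with hrdef
    have hr2 : 2 ≤ r := by
      have : (3:ℝ) ≤ (q:ℝ) := by exact_mod_cast hq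
      simp only [hrdef]; linarith
    have hr0 : 0 < r := by linarith
    -- existence of a zero in (0,1)
    have hc1 : ContinuousOn (pP r n) (Set.Icc 0 1) := (XiAux.pP_cont r n).continuousOn
    have hP1 : pP r n 1 < 0 := XiAux.P1 (by linarith) hn
    have hP0 : pP r n 0 = 1 := XiAux.P0 hn
    have hzero : (0:ℝ) ∈ Set.Ioo (pP r n 1) (pP r n 0) := ⟨hP1, by rw [hP0]; norm_num⟩
    obtain ⟨z2, hz2mem, hz2⟩ := intermediate_value_Ioo' (by norm_num : (0:ℝ) ≤ 1) hc1 hzero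
    obtain ⟨hz2pos, hz2lt⟩ := hz2mem
    -- basic facts
    have htpos : 0 < 1 / r := by positivity
    -- positivity of pP on (-(1/r), 0]
    have hsign : ∀ z : ℝ, -(1/r) < z → z ≤ 0 → 0 < pP r n z := by
      intro z h1 h2
      apply XiAux.pP_pos_of_F (by linarith : z < 1)
      apply XiAux.POSneg (by linarith) hn
      · have : (1:ℝ)/r ≤ 1/2 := by
          rw [div_le_div_iff₀ hr0 (by norm_num)]; linarith
        linarith
      · exact h2
      · have hzneg : -z < 1/r := by linarith
        calc r * (-z) < r * (1/r) := by exact mul_lt_mul_of_pos_left hzneg hr0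
          _ = 1 := by field_simp
    -- pP positive on (0, z2), negative on (z2, 1)
    have hposmid : ∀ z : ℝ, 0 < z → z < z2 → 0 < pP r n z := by
      intro z h1 h2
      have := XiAux.MONO (by linarith : (0:ℝ) ≤ r) hn h1 h2
      rw [hz2, mul_zero] at this
      have hz2n : 0 < z2 ^ n := pow_pos hz2pos n
      nlinarith
    have hnegmid : ∀ z : ℝ, z2 < z → pP r n z < 0 := by
      intro z h2
      have := XiAux.MONO (by linarith : (0:ℝ) ≤ r) hn hz2pos h2
      rw [hz2, mul_zero] at this
      have hz2n : 0 < z2 ^ n := pow_pos hz2pos n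
      nlinarith
    refine ⟨z2, ⟨by linarith, hz2lt⟩, hz2pos, ?_, ?_, ?_, ?_⟩
    · rw [XiAux.I1, ← hrdef, hz2, mul_zero]
    · -- uniqueness
      intro z hz hxz
      obtain ⟨hzl, hzr⟩ := hz
      rw [XiAux.I1, ← hrdef] at hxz
      have hP : pP r n z = 0 := by
        rcases mul_eq_zero.1 hxz with h | h
        · exfalso; linarith
        · exact h
      by_contra hne
      rcases le_or_gt z 0 with h0 | h0
      · have := hsign z hzl h0; linarith
      · rcases lt_or_gt_of_ne hne with h | h
        · have := hposmid z h0 h; linarith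
        · have := hnegmid z h; linarith
    · -- positive on (-(1/r), z2)
      intro z hz
      obtain ⟨hzl, hzr⟩ := hz
      have hzlt1 : z < 1 := by linarith
      rw [XiAux.I1, ← hrdef]
      have hP : 0 < pP r n z := by
        rcases le_or_gt z 0 with h0 | h0
        · exact hsign z hzl h0
        · exact hposmid z h0 hzr
      exact mul_pos (by linarith) hP
    · -- negative on (z2, 1)
      intro z hz
      obtain ⟨hzl, hzr⟩ := hz
      rw [XiAux.I1, ← hrdef]
      have hP : pP r n z < 0 := hnegmid z hzl
      nlinarith
end

section
/- Let c and d be integers with d ≥ c ≥ 3. If q = 2 and d is even, then the polynomial ξ_{2,c,d}(ẑ) has exactly one zero ẑ₂ in (0, 1) and exactly one zero ẑ₂′ in (−1, 0), and ξ_{2,c,d} is strictly positive on (ẑ₂′, ẑ₂) and strictly negative on (−1, ẑ₂′) ∪ (ẑ₂, 1). If q ≥ 2 is an integer with q ≥ 3 or d odd, then ξ_{q,c,d}(ẑ) has a unique zero ẑ₂ in (−1/(q−1), 1); this zero satisfies ẑ₂ > 0, and ξ_{q,c,d} is strictly positive on (−1/(q−1), ẑ₂) and strictly negative on (ẑ₂,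 1). -/
/-!
Write `A = (c-1)(d-1)-1`. For `z ≠ 0` one has `ξ(z) = z^(d-2) L(z)` with
`L(z) = Σ_{i=1}^{d-2} z^(-i) - A - (q-1) A z + (q-1) Σ_{i=2}^{d-1} z^i`,
which is strictly convex on `(0, ∞)`, tends to `+∞` at `0⁺` and has `L(1) = q (d-2-A) < 0`;
so `L`, and with it `ξ`, changes sign exactly once on `(0, 1)`.

On `(-1/(q-1), 0]` write `ξ(z) = S(z) (1 + (q-1) z^d) - A z^(d-2) (1 + (q-1) z)` with `S` the
geometric sum of length `d-2`. For odd `d` the first term is positive and the subtracted one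
negative. For even `d` and `q ≥ 3`, put `t = -z < 1/2`: then `S(z) ≥ 1 - t > 1/2`, while
`t²(1-2t) ≤ 1/27` and `A ≤ d(d-2) ≤ 2^(d-1)` bound the subtracted term by `8/27`.

For `q = 2` and `d = 2m+2` the factor `1 + z` splits off: `ξ(z) = z^(2m) (1 + z) H(z²)` with `H`
strictly convex of the same shape, so the zeros are `±√s` for the zero `s` of `H` in `(0, 1)`.
-/

open Real Set Filter Polynomial
open scoped Classical

def SignChangesAt (f : ℝ → ℝ) (a z b : ℝ) : Prop :=
  f z = 0 ∧ (∀ x ∈ Ioo a z, 0 < f x) ∧ ∀ x ∈ Ioo z b, f x < 0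

namespace SignChangesAt

variable {f g p : ℝ → ℝ} {a z b : ℝ}

theorem eq_of_apply_eq_zero (h : SignChangesAt f a z b) {x : ℝ} (hx : x ∈ Ioo a b)
    (hfx : f x = 0) : x = z := by
  rcases lt_trichotomy x z with hxz | hxz | hxz
  · exact absurd hfx (h.2.1 x ⟨hx.1, hxz⟩).ne'
  · exact hxz
  · exact absurd hfx (h.2.2 x ⟨hxz, hx.2⟩).ne

theorem extend_left (h : SignChangesAt f a z b) {a' : ℝ} (hpos : ∀ x ∈ Ioc a' a, 0 < f x) :
    SignChangesAt f a' z b := by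
  refine ⟨h.1, fun x hx => ?_, h.2.2⟩
  rcases le_or_gt x a with hxa | hax
  · exact hpos x ⟨hx.1, hxa⟩
  · exact h.2.1 x ⟨hax, hx.2⟩

theorem of_eqOn_mul (h : SignChangesAt f a z b) (hz : z ∈ Ioo a b)
    (hp : ∀ x ∈ Ioo a b, 0 < p x) (hg : EqOn g (fun x => p x * f x) (Ioo a b)) :
    SignChangesAt g a z b := by
  refine ⟨by simp only [hg hz, h.1, mul_zero], fun x hx => ?_, fun x hx => ?_⟩
  · have hx' : x ∈ Ioo a b := ⟨hx.1, hx.2.trans hz.2⟩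
    rw [hg hx']
    exact mul_pos (hp x hx') (h.2.1 x hx)
  · have hx' : x ∈ Ioo a b := ⟨hz.1.trans hx.1, hx.2⟩
    rw [hg hx']
    exact mul_neg_of_pos_of_neg (hp x hx') (h.2.2 x hx)

theorem comp_sq (h : SignChangesAt f 0 z 1) (hz : 0 ≤ z) :
    SignChangesAt (fun x => f (x ^ 2)) 0 (√z) 1 := by
  refine ⟨by simpa [sq_sqrt hz] using h.1, fun x hx => ?_, fun x hx => ?_⟩
  · exact h.2.1 _ ⟨pow_pos hx.1 2, (lt_sqrt hx.1.le).1 hx.2⟩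
  · have hx0 : 0 < x := (sqrt_nonneg z).trans_lt hx.1
    exact h.2.2 _ ⟨(sqrt_lt' hx0).1 hx.1, by nlinarith [hx.2]⟩

end SignChangesAt

theorem StrictConvexOn.exists_signChangesAt {f : ℝ → ℝ} {a b ε : ℝ}
    (hf : StrictConvexOn ℝ (Ioi a) f) (hε : ε ∈ Ioo a b) (hfε : 0 < f ε) (hfb : f b < 0) :
    ∃ z ∈ Ioo a b, SignChangesAt f a z b := by
  have hcont : ContinuousOn f (Icc ε b) :=
    (hf.convexOn.continuousOn isOpen_Ioi).mono fun x hx => hε.1.trans_le hx.1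
  obtain ⟨z, hz, hfz⟩ := intermediate_value_Ioo' hε.2.le hcont ⟨hfb, hfε⟩
  have hb : b ∈ Ioi a := hε.1.trans hε.2
  refine ⟨z, ⟨hε.1.trans hz.1, hz.2⟩, hfz, fun x hx => ?_, fun x hx => ?_⟩
  · have hzx : z ∈ openSegment ℝ x b := by
      rw [openSegment_eq_Ioo (hx.2.trans hz.2)]
      exact ⟨hx.2, hz.2⟩
    rw [← hfz]
    exact hf.convexOn.lt_left_of_right_lt hx.1 hb hzx (hfz ▸ hfb)
  · have hxz : x ∈ openSegment ℝ z b := by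
      rw [openSegment_eq_Ioo hz.2]
      exact hx
    simpa [hfz, hfb.le] using
      hf.lt_on_openSegment (hε.1.trans hz.1) hb hz.2.ne hxz

noncomputable def laurentSum (m k : ℕ) (a b C s : ℝ) : ℝ :=
  ∑ i ∈ Finset.range m, ((s ^ (i + 1))⁻¹ + C * s ^ (i + k)) + a + b * s

section laurentSum

variable {m k : ℕ} {a b C : ℝ}

theorem strictConvexOn_inv_pow_add_mul_pow (i j : ℕ) (hC : 0 ≤ C) :
    StrictConvexOn ℝ (Ioi 0) fun s : ℝ => (s ^ (i + 1))⁻¹ + C * s ^ j := by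
  have hinv : StrictConvexOn ℝ (Ioi 0) fun s : ℝ => (s ^ (i + 1))⁻¹ :=
    (strictConvexOn_zpow (m := -(i + 1 : ℤ)) (by omega) (by omega)).congr fun s _ => by
      simp only [zpow_neg]; norm_cast
  exact hinv.add_convexOn
    (((convexOn_pow j).subset Ioi_subset_Ici_self (convex_Ioi 0)).smul hC)

theorem convexOn_const_add_mul (a b : ℝ) : ConvexOn ℝ univ fun s : ℝ => a + b * s :=
  ⟨convex_univ, fun x _ y _ μ ν _ _ h => le_of_eq <| by
    simp only [smul_eq_mul]; linear_combination (-a) * h⟩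

theorem strictConvexOn_laurentSum (hm : m ≠ 0) (hC : 0 ≤ C) :
    StrictConvexOn ℝ (Ioi 0) (laurentSum m k a b C) := by
  have hsum : ∀ n ≠ 0, StrictConvexOn ℝ (Ioi 0)
      fun s : ℝ => ∑ i ∈ Finset.range n, ((s ^ (i + 1))⁻¹ + C * s ^ (i + k)) := by
    intro n hn
    induction n with
    | zero => exact absurd rfl hn
    | succ n ih =>
      simp_rw [Finset.sum_range_succ]
      rcases eq_or_ne n 0 with rfl | hn'
      · simpa using strictConvexOn_inv_pow_add_mul_pow 0 k hC
      · exact (ih hn').add (strictConvexOn_inv_pow_add_mul_pow n (n + k) hC)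
  have haff := (convexOn_const_add_mul a b).subset (subset_univ _) (convex_Ioi 0)
  exact ((hsum m hm).add_convexOn haff).congr fun s _ => by
    simp only [laurentSum, Pi.add_apply]; ring

theorem laurentSum_one : laurentSum m k a b C 1 = m + a + b + C * m := by
  simp [laurentSum]; ring

theorem exists_laurentSum_pos (hm : m ≠ 0) (hC : 0 ≤ C) :
    ∃ ε ∈ Ioo 0 1, 0 < laurentSum m k a b C ε := by
  set ε : ℝ := (|a| + |b| + 2)⁻¹
  have hε0 : 0 < ε := by positivity
  have hε1 : ε < 1 := inv_lt_one_of_one_lt₀ (by linarith [abs_nonneg a, abs_nonneg b])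
  refine ⟨ε, ⟨hε0, hε1⟩, ?_⟩
  have hfirst : ε⁻¹ ≤ ∑ i ∈ Finset.range m, ((ε ^ (i + 1))⁻¹ + C * ε ^ (i + k)) := by
    refine le_trans ?_ (Finset.single_le_sum (fun i _ => by positivity)
      (Finset.mem_range.2 (Nat.pos_of_ne_zero hm)))
    simp only [zero_add, pow_one, le_add_iff_nonneg_right]
    positivity
  have hb : -|b| ≤ b * ε := by
    nlinarith [neg_abs_le b, abs_nonneg b, abs_mul_abs_self b]
  rw [laurentSum]
  nlinarith [neg_abs_le a, inv_inv (|a| + |b| + 2)]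

theorem pow_mul_sum_inv_pow {s : ℝ} (hs : s ≠ 0) (n : ℕ) :
    s ^ n * ∑ i ∈ Finset.range n, (s ^ (i + 1))⁻¹ = ∑ i ∈ Finset.range n, s ^ i := by
  rw [Finset.mul_sum, ← Finset.sum_range_reflect (s ^ ·)]
  refine Finset.sum_congr rfl fun i hi => ?_
  rw [← pow_sub₀ _ hs (Finset.mem_range.1 hi)]
  congr 1; omega

theorem pow_mul_laurentSum {s : ℝ} (hs : s ≠ 0) :
    s ^ m * laurentSum m k a b C s
      = (∑ i ∈ Finset.range m, s ^ i) * (1 + C * s ^ (m + k)) + s ^ m * (a + b * s) := by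
  have hpow : s ^ m * ∑ i ∈ Finset.range m, s ^ (i + k)
      = s ^ (m + k) * ∑ i ∈ Finset.range m, s ^ i := by
    simp only [Finset.mul_sum, ← pow_add]
    exact Finset.sum_congr rfl fun i _ => by ring_nf
  rw [laurentSum, Finset.sum_add_distrib, ← Finset.mul_sum]
  linear_combination pow_mul_sum_inv_pow hs m + C * hpow

end laurentSum

noncomputable def xiCoeff (c d : ℕ) : ℝ := ((c : ℝ) - 1) * ((d : ℝ) - 1) - 1

theorem sub_two_lt_xiCoeff {c d : ℕ} (hc : 3 ≤ c) (hd : 2 ≤ d) :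
    (d : ℝ) - 2 < xiCoeff c d := by
  have hc' : (3 : ℝ) ≤ c := by exact_mod_cast hc
  have hd' : (2 : ℝ) ≤ d := by exact_mod_cast hd
  rw [xiCoeff]; nlinarith

theorem xiCoeff_le_sub_two_mul {c d : ℕ} (hcd : c ≤ d) :
    xiCoeff c d ≤ ((d : ℝ) - 2) * d := by
  have hcd' : (c : ℝ) ≤ d := by exact_mod_cast hcd
  have h : 0 ≤ ((d : ℝ) - 1) * (d - c) := by
    rcases Nat.eq_zero_or_pos d with rfl | hd
    · simp [Nat.le_zero.1 hcd]
    · exact mul_nonneg (sub_nonneg.2 (by exact_mod_cast hd)) (sub_nonneg.2 hcd')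
  rw [xiCoeff]; linarith

theorem xiF_eq_geom_sum (q c d : ℕ) (hd : 2 ≤ d) (z : ℝ) :
    xiF q c d z = (∑ i ∈ Finset.range (d - 2), z ^ i) * (1 + ((q : ℝ) - 1) * z ^ d)
      - xiCoeff c d * z ^ (d - 2) * (1 + ((q : ℝ) - 1) * z) := by
  have hsum : ∑ i ∈ Finset.range (d - 2), z ^ (d + i)
      = z ^ d * ∑ i ∈ Finset.range (d - 2), z ^ i := by
    simp only [Finset.mul_sum, pow_add]
  have hpow : z ^ (d - 1) = z ^ (d - 2) * z := by rw [← pow_succ]; congr 1; omega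
  rw [xiF, xiCoeff, hsum, hpow]; ring

theorem xiF_zero (q c : ℕ) {d : ℕ} (hd : 3 ≤ d) : xiF q c d 0 = 1 := by
  rw [xiF_eq_geom_sum q c d (by omega), zero_geom_sum, if_neg (by omega), zero_pow (by omega),
    zero_pow (by omega)]
  ring

theorem xiF_eq_pow_mul_laurentSum (q c : ℕ) {d : ℕ} (hd : 2 ≤ d) {z : ℝ} (hz : z ≠ 0) :
    xiF q c d z = z ^ (d - 2) *
      laurentSum (d - 2) 2 (-xiCoeff c d) (-(((q : ℝ) - 1) * xiCoeff c d)) ((q : ℝ) - 1) z := by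
  rw [pow_mul_laurentSum hz, Nat.sub_add_cancel hd, xiF_eq_geom_sum q c d hd]
  ring

theorem exists_xiF_signChangesAt {q c d : ℕ} (hq : 1 ≤ q) (hc : 3 ≤ c) (hd : 3 ≤ d) :
    ∃ z ∈ Ioo 0 1, SignChangesAt (xiF q c d) 0 z 1 := by
  have hC : (0 : ℝ) ≤ (q : ℝ) - 1 := sub_nonneg.2 (by exact_mod_cast hq)
  obtain ⟨ε, hε, hpos⟩ := exists_laurentSum_pos (k := 2) (a := -xiCoeff c d)
    (b := -(((q : ℝ) - 1) * xiCoeff c d)) (show d - 2 ≠ 0 by omega) hC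
  have hone : laurentSum (d - 2) 2 (-xiCoeff c d) (-(((q : ℝ) - 1) * xiCoeff c d))
      ((q : ℝ) - 1) 1 < 0 := by
    have hA := sub_two_lt_xiCoeff (d := d) hc (by omega)
    rw [laurentSum_one, Nat.cast_sub (by omega)]
    push_cast
    nlinarith
  obtain ⟨z, hz, h⟩ :=
    (strictConvexOn_laurentSum (by omega) hC).exists_signChangesAt hε hpos hone
  exact ⟨z, hz, h.of_eqOn_mul hz (fun x hx => pow_pos hx.1 _)
    fun x hx => xiF_eq_pow_mul_laurentSum q c (by omega) hx.1.ne'⟩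

theorem geom_sum_two_mul (z : ℝ) (m : ℕ) :
    ∑ i ∈ Finset.range (2 * m), z ^ i = (1 + z) * ∑ i ∈ Finset.range m, (z ^ 2) ^ i := by
  induction m with
  | zero => simp
  | succ m ih =>
    rw [show 2 * (m + 1) = 2 * m + 1 + 1 by ring, Finset.sum_range_succ, Finset.sum_range_succ,
      ih, Finset.sum_range_succ, ← pow_mul]
    ring

theorem xiF_two_eq_mul_laurentSum_sq {c d m : ℕ} (hd : d = 2 * m + 2) {z : ℝ} (hz : z ≠ 0) :
    xiF 2 c d z = z ^ (2 * m) * (1 + z) * laurentSum m 1 (-xiCoeff c d) 0 1 (z ^ 2) := by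
  have h := pow_mul_laurentSum (m := m) (k := 1) (a := -xiCoeff c d) (b := 0) (C := 1)
    (pow_ne_zero 2 hz)
  rw [← pow_mul, ← pow_mul] at h
  subst hd
  rw [xiF_eq_geom_sum 2 c _ (by omega), show 2 * m + 2 - 2 = 2 * m by omega, geom_sum_two_mul]
  push_cast
  linear_combination -(1 + z) * h

theorem exists_xiF_two_signChangesAt {c d : ℕ} (hc : 3 ≤ c) (hd : 3 ≤ d) (heven : Even d) :
    ∃ z ∈ Ioo 0 1, SignChangesAt (xiF 2 c d) 0 z 1 ∧
      SignChangesAt (fun x => xiF 2 c d (-x)) 0 z 1 := by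
  obtain ⟨m, hm⟩ : ∃ m, d = 2 * m + 2 := by
    obtain ⟨k, hk⟩ := heven; exact ⟨k - 1, by omega⟩
  obtain ⟨ε, hε, hpos⟩ := exists_laurentSum_pos (m := m) (k := 1) (a := -xiCoeff c d) (b := 0)
    (by omega) zero_le_one
  have hone : laurentSum m 1 (-xiCoeff c d) 0 1 1 < 0 := by
    have hA := sub_two_lt_xiCoeff (d := d) hc (by omega)
    have hd' : (d : ℝ) = 2 * m + 2 := by exact_mod_cast hm
    rw [laurentSum_one]
    linarith
  obtain ⟨s, hs, h⟩ :=
    (strictConvexOn_laurentSum (by omega) zero_le_one).exists_signChangesAt hε hpos hone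
  have hsq := h.comp_sq hs.1.le
  have hroot : √s ∈ Ioo 0 1 := ⟨sqrt_pos.2 hs.1, (sqrt_lt' one_pos).2 (by simpa using hs.2)⟩
  refine ⟨√s, hroot, hsq.of_eqOn_mul hroot (p := fun x => x ^ (2 * m) * (1 + x))
      (fun x hx => by have := hx.1; positivity)
      fun x hx => xiF_two_eq_mul_laurentSum_sq hm hx.1.ne',
    hsq.of_eqOn_mul hroot (p := fun x => x ^ (2 * m) * (1 - x))
      (fun x hx => mul_pos (pow_pos hx.1 _) (sub_pos.2 hx.2)) fun x hx => ?_⟩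
  simp only [xiF_two_eq_mul_laurentSum_sq hm (neg_ne_zero.2 hx.1.ne'), neg_sq,
    (even_two_mul m).neg_pow, sub_eq_add_neg]

theorem Nat.mul_add_two_le_two_pow : ∀ n : ℕ, n * (n + 2) ≤ 2 ^ (n + 1)
  | 0 => by norm_num
  | 1 => by norm_num
  | 2 => by norm_num
  | n + 3 => by
    have := Nat.mul_add_two_le_two_pow (n + 2)
    rw [pow_succ]
    nlinarith

theorem mul_pow_mul_one_sub_two_mul_le {n : ℕ} (hn : 2 ≤ n) {t : ℝ} (ht0 : 0 ≤ t)
    (ht : t ≤ 1 / 2) : n * (n + 2) * t ^ n * (1 - 2 * t) ≤ 8 / 27 := by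
  obtain ⟨k, rfl⟩ : ∃ k, n = k + 2 := ⟨n - 2, by omega⟩
  have hcoef : ((k + 2 : ℕ) : ℝ) * ((k + 2 : ℕ) + 2) ≤ 2 ^ (k + 3) := by
    exact_mod_cast Nat.mul_add_two_le_two_pow (k + 2)
  have hpow : t ^ (k + 2) ≤ (1 / 2) ^ k * t ^ 2 := by
    rw [pow_add]; gcongr
  have hcubic : t ^ 2 * (1 - 2 * t) ≤ 1 / 27 := by nlinarith [sq_nonneg (t - 1 / 3)]
  have h8 : (2 : ℝ) ^ (k + 3) * (1 / 2) ^ k = 8 := by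
    rw [pow_add, mul_right_comm, ← mul_pow]; norm_num
  calc ((k + 2 : ℕ) : ℝ) * ((k + 2 : ℕ) + 2) * t ^ (k + 2) * (1 - 2 * t)
      ≤ 2 ^ (k + 3) * ((1 / 2) ^ k * t ^ 2) * (1 - 2 * t) := by gcongr; linarith
    _ = 8 * (t ^ 2 * (1 - 2 * t)) := by rw [← h8]; ring
    _ ≤ 8 / 27 := by linarith

theorem xiF_pos_of_odd {q c d : ℕ} (hq : 2 ≤ q) (hc : 3 ≤ c) (hd : 3 ≤ d) (hodd : Odd d)
    {z : ℝ} (hz : z < 0) (hqz : 0 < 1 + ((q : ℝ) - 1) * z) : 0 < xiF q c d z := by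
  have hq' : (1 : ℝ) ≤ (q : ℝ) - 1 := by
    have : (2 : ℝ) ≤ q := by exact_mod_cast hq
    linarith
  have hz1 : -1 < z := by nlinarith
  have hS : 0 < ∑ i ∈ Finset.range (d - 2), z ^ i := geom_sum_pos' (by linarith) (by omega)
  have hzn : z ^ (d - 2) < 0 := by
    obtain ⟨k, hk⟩ := hodd
    exact Odd.pow_neg ⟨k - 1, by omega⟩ hz
  have hzd : z ≤ z ^ d := by
    obtain ⟨k, rfl⟩ := hodd
    rw [pow_succ, pow_mul]
    nlinarith [pow_le_one₀ (n := k) (sq_nonneg z) (by nlinarith : z ^ 2 ≤ 1),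
      pow_nonneg (sq_nonneg z) k]
  have hA : 0 < xiCoeff c d := by
    have : (3 : ℝ) ≤ d := by exact_mod_cast hd
    linarith [sub_two_lt_xiCoeff (d := d) hc (by omega)]
  have h1 : 0 < 1 + ((q : ℝ) - 1) * z ^ d := by
    nlinarith [mul_le_mul_of_nonneg_left hzd (by linarith : (0 : ℝ) ≤ (q : ℝ) - 1)]
  rw [xiF_eq_geom_sum q c d (by omega)]
  linarith [mul_pos hS h1, mul_pos hA (mul_pos (neg_pos.2 hzn) hqz)]

theorem xiF_pos_of_even {q c d : ℕ} (hq : 3 ≤ q) (hd : 3 ≤ d) (hcd : c ≤ d) (heven : Even d)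
    {z : ℝ} (hz : z < 0) (hqz : 0 < 1 + ((q : ℝ) - 1) * z) : 0 < xiF q c d z := by
  obtain ⟨n, hn⟩ : ∃ n, d = n + 2 := ⟨d - 2, by omega⟩
  have hn2 : 2 ≤ n := by obtain ⟨k, hk⟩ := heven; omega
  have hneven : Even n := by simpa [hn, Nat.even_add] using heven
  have hq' : (2 : ℝ) ≤ (q : ℝ) - 1 := by
    have : (3 : ℝ) ≤ q := by exact_mod_cast hq
    linarith
  set t := -z with ht
  have ht0 : 0 < t := by linarith
  have ht2 : t < 1 / 2 := by nlinarith
  have hzn : z ^ n = t ^ n := by rw [ht, hneven.neg_pow]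
  have htn : t ^ n ≤ t ^ 2 := pow_le_pow_of_le_one ht0.le (by linarith) hn2
  have hS : 1 - t ≤ ∑ i ∈ Finset.range n, z ^ i := by
    have := geom_sum_mul_neg z n
    nlinarith
  have hzd : 0 ≤ z ^ d := heven.pow_nonneg z
  have hA := xiCoeff_le_sub_two_mul hcd
  have hbound : xiCoeff c d * z ^ n * (1 + ((q : ℝ) - 1) * z) ≤ 8 / 27 := by
    have key := mul_pow_mul_one_sub_two_mul_le hn2 ht0.le ht2.le
    have hd' : (d : ℝ) = n + 2 := by exact_mod_cast hn
    have hdn : ((d : ℝ) - 2) * d = n * (n + 2) := by rw [hd']; ring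
    rw [hzn]
    calc xiCoeff c d * t ^ n * (1 + ((q : ℝ) - 1) * z)
        ≤ n * (n + 2) * t ^ n * (1 - 2 * t) := by
          gcongr
          · linarith
          · nlinarith [mul_le_mul_of_nonpos_right hq' hz.le]
      _ ≤ 8 / 27 := key
  have hterm : 0 ≤ (∑ i ∈ Finset.range n, z ^ i) * (((q : ℝ) - 1) * z ^ d) :=
    mul_nonneg (by linarith) (mul_nonneg (by linarith) hzd)
  rw [xiF_eq_geom_sum q c d (by omega), show d - 2 = n by omega]
  linarith

theorem xiF_pos_of_mem_Ioc {q c d : ℕ} (hq : 2 ≤ q) (hc : 3 ≤ c) (hcd : c ≤ d)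
    (hqd : 3 ≤ q ∨ Odd d) {z : ℝ} (hz : z ∈ Ioc (-(1 / ((q : ℝ) - 1))) 0) :
    0 < xiF q c d z := by
  rcases hz.2.eq_or_lt with rfl | hz0
  · rw [xiF_zero q c (by omega)]; exact one_pos
  have hq1 : (0 : ℝ) < (q : ℝ) - 1 := sub_pos.2 (Nat.one_lt_cast.2 hq)
  have hqz : 0 < 1 + ((q : ℝ) - 1) * z := by
    have := (lt_div_iff₀ hq1).1 (neg_lt.1 hz.1)
    linarith
  rcases Nat.even_or_odd d with heven | hodd
  · have hq3 := hqd.resolve_right (Nat.not_odd_iff_even.2 heven)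
    exact xiF_pos_of_even hq3 (hc.trans hcd) hcd heven hz0 hqz
  · exact xiF_pos_of_odd hq hc (by omega) hodd hz0 hqz

/-- Sign pattern of `ξ_{q,c,d}` for `d ≥ c ≥ 3`: when `q = 2` and `d` is
even there is exactly one zero in `(0,1)` and one in `(−1,0)`, with `ξ` positive between
them and negative outside; when `q ≥ 3` or `d` is odd there is a unique zero
`ẑ₂ ∈ (−1/(q−1), 1)`, which is positive, with `ξ` positive before it and negative after. -/
theorem xiF_signs (c d : ℕ) (hc : 3 ≤ c) (hcd : c ≤ d) :
    (Even d →
      ∃ z2 ∈ Set.Ioo (0 : ℝ) 1, ∃ z2' ∈ Set.Ioo (-1 : ℝ) 0,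
        xiF 2 c d z2 = 0 ∧ xiF 2 c d z2' = 0 ∧
        (∀ z ∈ Set.Ioo (0 : ℝ) 1, xiF 2 c d z = 0 → z = z2) ∧
        (∀ z ∈ Set.Ioo (-1 : ℝ) 0, xiF 2 c d z = 0 → z = z2') ∧
        (∀ z ∈ Set.Ioo z2' z2, 0 < xiF 2 c d z) ∧
        (∀ z ∈ Set.Ioo (-1 : ℝ) z2' ∪ Set.Ioo z2 1, xiF 2 c d z < 0)) ∧
    (∀ q : ℕ, 2 ≤ q → 3 ≤ q ∨ Odd d →
      ∃ z2 ∈ Set.Ioo (-(1 / ((q : ℝ) - 1))) 1,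
        0 < z2 ∧ xiF q c d z2 = 0 ∧
        (∀ z ∈ Set.Ioo (-(1 / ((q : ℝ) - 1))) 1, xiF q c d z = 0 → z = z2) ∧
        (∀ z ∈ Set.Ioo (-(1 / ((q : ℝ) - 1))) z2, 0 < xiF q c d z) ∧
        (∀ z ∈ Set.Ioo z2 1, xiF q c d z < 0)) := by
  have hd : 3 ≤ d := hc.trans hcd
  refine ⟨fun heven => ?_, fun q hq hqd => ?_⟩
  · obtain ⟨z2, hz2, hpos, hneg⟩ := exists_xiF_two_signChangesAt hc hd heven
    have hmem : ∀ {z}, z ∈ Ioo (-1 : ℝ) 0 → -z ∈ Ioo (0 : ℝ) 1 := fun hz =>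
      ⟨neg_pos.2 hz.2, neg_lt.1 hz.1⟩
    refine ⟨z2, hz2, -z2, ⟨neg_lt_neg hz2.2, neg_neg_of_pos hz2.1⟩, hpos.1, hneg.1,
      fun z hz h0 => hpos.eq_of_apply_eq_zero hz h0, fun z hz h0 => ?_, fun z hz => ?_, ?_⟩
    · rw [← hneg.eq_of_apply_eq_zero (hmem hz) (by rwa [neg_neg]), neg_neg]
    · rcases lt_trichotomy z 0 with hz0 | rfl | hz0
      · simpa using hneg.2.1 (-z) ⟨neg_pos.2 hz0, neg_lt.1 hz.1⟩
      · rw [xiF_zero 2 c hd]; exact one_pos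
      · exact hpos.2.1 z ⟨hz0, hz.2⟩
    · rintro z (hz | hz)
      · simpa using hneg.2.2 (-z) ⟨lt_neg.1 hz.2, neg_lt.1 hz.1⟩
      · exact hpos.2.2 z hz
  · obtain ⟨z2, hz2, h⟩ := exists_xiF_signChangesAt (q := q) (by omega) hc hd
    have h' := h.extend_left fun z hz => xiF_pos_of_mem_Ioc hq hc hcd hqd hz
    have hq1 : 0 < 1 / ((q : ℝ) - 1) := one_div_pos.2 (sub_pos.2 (Nat.one_lt_cast.2 hq))
    exact ⟨z2, ⟨(neg_neg_of_pos hq1).trans hz2.1, hz2.2⟩, hz2.1, h'.1,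
      fun z hz h0 => h'.eq_of_apply_eq_zero hz h0, h'.2.1, h'.2.2⟩
end

section
/- For all integers q ≥ 2, c ≥ 1, d ≥ 2, and every x ∈ (0, 1/q²): ω_{q,c,d}(x) < (c/2 − 1)·x·ln x + κ_{q,c,d}·x, where κ_{q,c,d} := ln(q−1) + (c/2)·ln(d−1) + 3c. -/
open Real Set Filter Polynomial
open scoped Classical

/-- The entropy function `H_q`. -/
noncomputable def Hent (q : ℕ) (x : ℝ) : ℝ :=
  x * Real.log (1 / x) + (1 - x) * Real.log (1 / (1 - x)) + x * Real.log ((q : ℝ) - 1)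

/-- The information divergence function `D(x‖y)`. -/
noncomputable def Dkl (x y : ℝ) : ℝ :=
  x * Real.log (x / y) + (1 - x) * Real.log ((1 - x) / (1 - y))

/-- The function `ρ_{q,d}`. -/
noncomputable def rhoF (q d : ℕ) (x : ℝ) : ℝ :=
  Real.log (1 + ((q : ℝ) - 1) * (1 - (q : ℝ) * x / ((q : ℝ) - 1)) ^ d)

/-- The function `δ_{q,d}(x, x̂)`. -/
noncomputable def deltaTwo (q d : ℕ) (x xh : ℝ) : ℝ :=
  (d : ℝ) * Dkl x xh + rhoF q d xh

/-- The function `δ_{q,d}(x) = inf_{x̂ ∈ (0,1)} δ_{q,d}(x, x̂)`. -/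
noncomputable def deltaMin (q d : ℕ) (x : ℝ) : ℝ :=
  sInf ((fun xh => deltaTwo q d x xh) '' Set.Ioo 0 1)

/-- The asymptotic growth rate `ω_{q,c,d}`. -/
noncomputable def omegaF (q c d : ℕ) (x : ℝ) : ℝ :=
  Hent q x + ((c : ℝ) / (d : ℝ)) * (deltaMin q d x - Real.log (q : ℝ))

/-! The infimum `δ_{q,d}(x)` is bounded by its value at `x̂ = √(x / (4(d-1)))`. There
`ρ_{q,d}(x̂) ≤ ln q - d x̂ + d² q x̂² / (q-1)`, by `(1-s)^d ≤ 1 - ds + (ds)²` and `ln t ≤ t - 1`,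
while `d·D(x‖x̂) ≤ d (x ln(x/x̂) + x̂ - x + (x̂-x)²/(1-x̂))`. The terms `± d x̂` cancel, the choice of
`x̂` makes the quadratic terms `O(d x)`, and `d x ln(x/x̂) = d x (½ ln(x(d-1)) + ln 2)`. After scaling by
`c/d`, adding `H_q(x) ≤ x ln(1/x) + x + x ln(q-1)` leaves the constant `1 + c (ln 2 + 2/3) < 3c`. -/

open InformationTheory

theorem sub_le_mul_log_div {a b : ℝ} (ha : 0 ≤ a) (hb : 0 < b) : a - b ≤ a * log (a / b) := by
  have h := mul_nonneg hb.le (klFun_nonneg (div_nonneg ha hb.le))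
  have h_eq : b * klFun (a / b) = a * log (a / b) + b - a := by
    rw [klFun_apply]; field_simp
  linarith

theorem dkl_nonneg {x y : ℝ} (hx₀ : 0 ≤ x) (hx₁ : x ≤ 1) (hy₀ : 0 < y) (hy₁ : y < 1) :
    0 ≤ Dkl x y := by
  have h₁ := sub_le_mul_log_div hx₀ hy₀
  have h₂ := sub_le_mul_log_div (sub_nonneg.2 hx₁) (sub_pos.2 hy₁)
  unfold Dkl
  linarith

theorem dkl_le {x y : ℝ} (hx : x < 1) (hy : y < 1) :
    Dkl x y ≤ x * log (x / y) + (y - x) + (y - x) ^ 2 / (1 - y) := by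
  have hx' : 0 < 1 - x := sub_pos.2 hx
  have hy' : 0 < 1 - y := sub_pos.2 hy
  have h := mul_le_mul_of_nonneg_left (log_le_sub_one_of_pos (div_pos hx' hy')) hx'.le
  have h_eq : (1 - x) * ((1 - x) / (1 - y) - 1) = (y - x) + (y - x) ^ 2 / (1 - y) := by
    field_simp; ring
  unfold Dkl
  linarith

theorem one_sub_pow_le {s : ℝ} (hs₀ : 0 ≤ s) (hs₁ : s ≤ 1) (d : ℕ) :
    (1 - s) ^ d ≤ 1 - d * s + (d * s) ^ 2 := by
  have hu : 0 ≤ (d : ℝ) * s := by positivity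
  have h_bernoulli : (1 + d * s) * (1 - s) ^ d ≤ 1 :=
    calc (1 + d * s) * (1 - s) ^ d ≤ (1 + s) ^ d * (1 - s) ^ d := by
          gcongr
          exact one_add_mul_le_pow (by linarith) d
      _ = (1 - s ^ 2) ^ d := by rw [← mul_pow]; ring
      _ ≤ 1 := pow_le_one₀ (by nlinarith) (by nlinarith)
  nlinarith [pow_nonneg hu 3]

theorem rhoF_nonneg {q : ℕ} (hq : 1 ≤ q) (d : ℕ) {y : ℝ} (hs : q * y / (q - 1) ≤ 1) :
    0 ≤ rhoF q d y := by
  have hq' : (0 : ℝ) ≤ q - 1 := by rw [sub_nonneg]; exact_mod_cast hq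
  have := mul_nonneg hq' (pow_nonneg (sub_nonneg.2 hs) d)
  exact log_nonneg (by linarith)

theorem rhoF_le {q : ℕ} (hq : 1 < q) (d : ℕ) {y : ℝ} (hy : 0 ≤ y) (hs : q * y / (q - 1) ≤ 1) :
    rhoF q d y ≤ log q - d * y + d ^ 2 * q * y ^ 2 / (q - 1) := by
  have hq₀ : (0 : ℝ) < q := by positivity
  have hq₁ : (0 : ℝ) < q - 1 := by rw [sub_pos]; exact_mod_cast hq
  set s := q * y / (q - 1) with hs_def
  set A := 1 + ((q : ℝ) - 1) * (1 - s) ^ d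
  have hA : 0 < A := by have := pow_nonneg (sub_nonneg.2 hs) d; positivity
  have h_log : log A ≤ log q + (A / q - 1) := by
    have := log_le_sub_one_of_pos (div_pos hA hq₀)
    rwa [log_div hA.ne' hq₀.ne', sub_le_iff_le_add'] at this
  have h_pow := one_sub_pow_le (by positivity) hs d
  have h_A : A / q - 1 ≤ (q - 1) / q * ((d * s) ^ 2 - d * s) := by
    rw [div_sub_one hq₀.ne', div_mul_eq_mul_div]
    gcongr
    nlinarith
  have h_eq : (q - 1) / q * ((d * s) ^ 2 - d * s) = d ^ 2 * q * y ^ 2 / (q - 1) - d * y := by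
    rw [hs_def]; field_simp
  unfold rhoF
  linarith

theorem deltaTwo_nonneg {q : ℕ} (hq : 1 ≤ q) (d : ℕ) {x y : ℝ} (hx₀ : 0 ≤ x) (hx₁ : x ≤ 1)
    (hy₀ : 0 < y) (hy₁ : y < 1) (hs : q * y / (q - 1) ≤ 1) : 0 ≤ deltaTwo q d x y :=
  add_nonneg (mul_nonneg d.cast_nonneg (dkl_nonneg hx₀ hx₁ hy₀ hy₁)) (rhoF_nonneg hq d hs)

theorem deltaTwo_sub_log_le {q : ℕ} (hq : 1 < q) (d : ℕ) {x y : ℝ} (hx : x < 1) (hy₀ : 0 ≤ y)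
    (hy₁ : y < 1) (hs : q * y / (q - 1) ≤ 1) :
    deltaTwo q d x y - log q ≤
      d * (x * log (x / y) - x + (y - x) ^ 2 / (1 - y) + d * q * y ^ 2 / (q - 1)) := by
  have h_dkl := mul_le_mul_of_nonneg_left (dkl_le hx hy₁) d.cast_nonneg
  have h_rho := rhoF_le hq d hy₀ hs
  have h_eq : (d : ℝ) * (d * q * y ^ 2 / (q - 1)) = d ^ 2 * q * y ^ 2 / (q - 1) := by ring
  unfold deltaTwo
  linarith

/-- The hypothesis `0 ≤ a` covers the junk value `sInf s = 0` of a set unbounded below. -/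
theorem sInf_le_of_mem_of_nonneg {s : Set ℝ} {a : ℝ} (ha : a ∈ s) (h₀ : 0 ≤ a) : sInf s ≤ a := by
  by_cases hs : BddBelow s
  · exact csInf_le hs ha
  · rwa [Real.sInf_of_not_bddBelow hs]

theorem quadratic_remainder_le {q d : ℕ} (hq : 2 ≤ q) (hd : 2 ≤ d) {x y : ℝ} (hx₀ : 0 ≤ x)
    (hx₁ : x ≤ 1 / 4) (hy₀ : 0 ≤ y) (hy : 4 * (d - 1) * y ^ 2 = x) :
    (y - x) ^ 2 / (1 - y) + d * q * y ^ 2 / (q - 1) ≤ 5 * x / 3 := by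
  have hq' : (2 : ℝ) ≤ q := by exact_mod_cast hq
  have hd' : (2 : ℝ) ≤ d := by exact_mod_cast hd
  have hy_sq : 4 * y ^ 2 ≤ x := by rw [← hy]; nlinarith
  have hy₁ : y ≤ 1 / 4 := by nlinarith
  have h_first : (y - x) ^ 2 / (1 - y) ≤ 2 * x / 3 := by
    rw [div_le_iff₀ (by linarith)]
    nlinarith [mul_nonneg hx₀ hy₀, mul_nonneg hx₀ (sub_nonneg.2 hx₁)]
  have h_second : d * q * y ^ 2 / (q - 1) ≤ x := by
    rw [div_le_iff₀ (by linarith), ← hy]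
    nlinarith [mul_nonneg (mul_nonneg (sub_nonneg.2 hd') (sub_nonneg.2 hq')) (sq_nonneg y)]
  linarith

theorem deltaMin_le_deltaTwo {q : ℕ} (hq : 1 ≤ q) (d : ℕ) {x y : ℝ} (hx₀ : 0 ≤ x) (hx₁ : x ≤ 1)
    (hy₀ : 0 < y) (hy₁ : y < 1) (hs : q * y / (q - 1) ≤ 1) : deltaMin q d x ≤ deltaTwo q d x y :=
  sInf_le_of_mem_of_nonneg ⟨y, ⟨hy₀, hy₁⟩, rfl⟩ (deltaTwo_nonneg hq d hx₀ hx₁ hy₀ hy₁ hs)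

theorem deltaMin_sub_log_le {q d : ℕ} (hq : 2 ≤ q) (hd : 2 ≤ d) {x : ℝ} (hx₀ : 0 < x)
    (hx₁ : x ≤ 1 / 4) :
    deltaMin q d x - log q ≤ d * x * ((log x + log (d - 1)) / 2 + log 2 + 2 / 3) := by
  have hq' : (2 : ℝ) ≤ q := by exact_mod_cast hq
  have hd' : (1 : ℝ) ≤ d - 1 := by
    have : (2 : ℝ) ≤ d := by exact_mod_cast hd
    linarith
  obtain ⟨y, hy₀, hy⟩ : ∃ y : ℝ, 0 < y ∧ 4 * (d - 1) * y ^ 2 = x :=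
    ⟨√(x / (4 * (d - 1))), by positivity, by rw [sq_sqrt (by positivity)]; field_simp⟩
  have hy₁ : y ≤ 1 / 4 := by nlinarith
  have hs : q * y / (q - 1) ≤ 1 := by rw [div_le_one (by linarith)]; nlinarith
  have h_log : log (x / y) = (log x + log (d - 1)) / 2 + log 2 := by
    have h := congrArg log hy
    rw [log_mul (by positivity) (by positivity), log_mul (by norm_num) (by linarith), log_pow,
      show (4 : ℝ) = 2 ^ 2 by norm_num, log_pow] at h
    rw [log_div hx₀.ne' hy₀.ne']
    push_cast at h
    linarith
  have h_rem := quadratic_remainder_le hq hd hx₀.le hx₁ hy₀.le hy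
  calc deltaMin q d x - log q ≤ deltaTwo q d x y - log q := by
        gcongr
        exact deltaMin_le_deltaTwo (by omega) d hx₀.le (by linarith) hy₀ (by linarith) hs
    _ ≤ d * (x * log (x / y) - x + (y - x) ^ 2 / (1 - y) + d * q * y ^ 2 / (q - 1)) :=
        deltaTwo_sub_log_le (by omega) d (by linarith) hy₀.le (by linarith) hs
    _ ≤ d * (x * log (x / y) + 2 / 3 * x) := by gcongr d * ?_; linarith
    _ = d * x * ((log x + log (d - 1)) / 2 + log 2 + 2 / 3) := by rw [h_log]; ring

theorem hent_le (q : ℕ) {x : ℝ} (hx : x ≤ 1) : Hent q x ≤ -(x * log x) + x + x * log (q - 1) := by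
  have h := sub_le_mul_log_div (sub_nonneg.2 hx) one_pos
  rw [div_one] at h
  simp only [Hent, one_div, log_inv]
  linarith

/-- For `q ≥ 2`, `c ≥ 1`, `d ≥ 2` and `x ∈ (0, 1/q²)`:
`ω_{q,c,d}(x) < (c/2 − 1)·x·ln x + κ_{q,c,d}·x` with
`κ_{q,c,d} = ln(q−1) + (c/2)·ln(d−1) + 3c`. -/
theorem omegaF_small_x_upper_bound (q c d : ℕ) (hq : 2 ≤ q) (hc : 1 ≤ c) (hd : 2 ≤ d)
    (x : ℝ) (hx : x ∈ Set.Ioo 0 (1 / (q : ℝ) ^ 2)) :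
    omegaF q c d x <
      ((c : ℝ) / 2 - 1) * x * Real.log x +
        (Real.log ((q : ℝ) - 1) + ((c : ℝ) / 2) * Real.log ((d : ℝ) - 1) + 3 * (c : ℝ)) * x := by
  obtain ⟨hx₀, hx₁⟩ := hx
  have hq' : (2 : ℝ) ≤ q := by exact_mod_cast hq
  have hc' : (1 : ℝ) ≤ c := by exact_mod_cast hc
  have hx_le : x ≤ 1 / 4 :=
    hx₁.le.trans (one_div_le_one_div_of_le (by norm_num) (by nlinarith))
  have h_delta : c / d * (deltaMin q d x - log q) ≤
      c * x * ((log x + log (d - 1)) / 2 + log 2 + 2 / 3) :=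
    calc c / d * (deltaMin q d x - log q)
        ≤ c / d * (d * x * ((log x + log (d - 1)) / 2 + log 2 + 2 / 3)) := by
          gcongr; exact deltaMin_sub_log_le hq hd hx₀ hx_le
      _ = c * x * ((log x + log (d - 1)) / 2 + log 2 + 2 / 3) := by field_simp
  have h_const : x * (1 + c * (log 2 + 2 / 3)) < x * (3 * c) := by
    have := log_two_lt_d9
    exact mul_lt_mul_of_pos_left (by nlinarith) hx₀
  have h_ent := hent_le q (by linarith : x ≤ 1)
  unfold omegaF
  linarith
end
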